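/- Suppose b_k > 0 with b_k ~ t_k/log t_k and d_k > 0 with d_k ~ (log k)^{3/4}·exp(√(log t_{k+1}/6.315)), where t_k ~ k log k. Then ((b + b_k)/(b + d_k))^{ξ+k−1} → ∞ as k → ∞ for any fixed b ≥ 0, ξ ≥ 0. -/

import Mathlib

/-!
Since `t_k ~ k log k`, also `log t_k ~ log k`, hence `b_k ~ t_k / log t_k ~ k`. On the other
side `log t_{k+1} ≤ 4 log k` eventually and `4 < 6.315`, so
`d_k = O((log k)^{3/4} e^{√(log k)}) = o(k)`, because `x^{3/4} e^{√x} = o(e^x)`.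
As `b_k, d_k → ∞`, adding `b` preserves these asymptotics, so the base `(b + b_k)/(b + d_k)`
tends to infinity, while the exponent is eventually `≥ 1`.
-/

open Filter Asymptotics Real Topology

section Filters

variable {α : Type*} {l : Filter α}

theorem Asymptotics.IsEquivalent.const_add {u v : α → ℝ} (huv : u ~[l] v)
    (hv : Tendsto v l atTop) (b : ℝ) : (fun x => b + u x) ~[l] v := by
  have hb : (fun _ => b) =o[l] v :=
    isLittleO_const_left.2 <| Or.inr <| tendsto_norm_atTop_atTop.comp hv
  exact (huv.add_isLittleO hb).congr_left <| .of_eq <| funext fun x => add_comm (u x) b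

theorem Asymptotics.IsLittleO.tendsto_div_atTop {f g : α → ℝ} (h : g =o[l] f)
    (hf : ∀ᶠ x in l, 0 < f x) (hg : ∀ᶠ x in l, 0 < g x) :
    Tendsto (fun x => f x / g x) l atTop := by
  have hgf : Tendsto (fun x => g x / f x) l (𝓝[>] 0) :=
    tendsto_nhdsWithin_iff.2 ⟨h.tendsto_div_nhds_zero,
      by filter_upwards [hf, hg] with x hfx hgx using div_pos hgx hfx⟩
  exact hgf.inv_tendsto_nhdsGT_zero.congr fun x => inv_div (g x) (f x)

theorem Filter.Tendsto.rpow_of_one_le {f g : α → ℝ} (hf : Tendsto f l atTop)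
    (hg : ∀ᶠ x in l, 1 ≤ g x) : Tendsto (fun x => f x ^ g x) l atTop :=
  tendsto_atTop_mono' l (by
    filter_upwards [hf.eventually_ge_atTop 1, hg] with x hfx hgx
    exact self_le_rpow_of_one_le hfx hgx) hf

end Filters

theorem isLittleO_rpow_mul_exp_sqrt_exp (a : ℝ) :
    (fun x => x ^ a * exp √x) =o[atTop] exp := by
  have hsqrt : (fun x => exp √x) =O[atTop] fun x => exp (1 / 2 * x) := by
    refine IsBigO.of_bound' ?_
    filter_upwards [eventually_ge_atTop 4] with x hx
    simp only [norm_eq_abs, abs_exp, exp_le_exp]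
    have h2 : 2 ≤ √x := (le_sqrt zero_le_two (by linarith)).2 (by linarith)
    nlinarith [sq_sqrt (by linarith : (0 : ℝ) ≤ x)]
  refine ((isLittleO_rpow_exp_pos_mul_atTop a one_half_pos).mul_isBigO hsqrt).congr_right ?_
  intro x
  rw [← exp_add]
  ring_nf

section Sequences

variable {t : ℕ → ℝ}

theorem tendsto_log_natCast_atTop : Tendsto (fun k : ℕ => log (k : ℝ)) atTop atTop :=
  tendsto_log_atTop.comp tendsto_natCast_atTop_atTop

theorem isEquivalent_log_of_isEquivalent_mul_log
    (ht : t ~[atTop] fun k : ℕ => (k : ℝ) * log k) :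
    (fun k => log (t k)) ~[atTop] fun k : ℕ => log (k : ℝ) := by
  have hlogMul : (fun k => log (t k)) ~[atTop] fun k : ℕ => log ((k : ℝ) * log k) :=
    ht.log (tendsto_natCast_atTop_atTop.atTop_mul_atTop₀ tendsto_log_natCast_atTop)
  have hloglog : (fun k : ℕ => log (log (k : ℝ))) =o[atTop] fun k : ℕ => log (k : ℝ) :=
    isLittleO_log_id_atTop.comp_tendsto tendsto_log_natCast_atTop
  refine hlogMul.trans <| (IsEquivalent.refl.add_isLittleO hloglog).congr_left ?_
  filter_upwards [tendsto_log_natCast_atTop.eventually_gt_atTop 0] with k hk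
  have hk0 : (k : ℝ) ≠ 0 := by rintro h; simp [h] at hk
  simp only [Pi.add_apply, log_mul hk0 hk.ne']

theorem isEquivalent_div_log_self (ht : t ~[atTop] fun k : ℕ => (k : ℝ) * log k) :
    (fun k => t k / log (t k)) ~[atTop] fun k : ℕ => (k : ℝ) := by
  refine (ht.div (isEquivalent_log_of_isEquivalent_mul_log ht)).congr_right ?_
  filter_upwards [tendsto_log_natCast_atTop.eventually_gt_atTop 0] with k hk
  exact mul_div_cancel_right₀ _ hk.ne'

theorem eventually_log_succ_le_four_mul_log
    (ht : (fun k => log (t k)) ~[atTop] fun k : ℕ => log (k : ℝ)) :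
    ∀ᶠ k : ℕ in atTop, log (t (k + 1)) ≤ 4 * log k := by
  have hle : ∀ᶠ k : ℕ in atTop, log (t k) ≤ 2 * log k := by
    filter_upwards [ht.isLittleO.bound one_pos,
      tendsto_log_natCast_atTop.eventually_ge_atTop 0] with k hk hlog
    simp only [Pi.sub_apply, norm_eq_abs, one_mul, abs_of_nonneg hlog] at hk
    linarith [le_abs_self (log (t k) - log k)]
  filter_upwards [(tendsto_add_atTop_nat 1).eventually hle, eventually_ge_atTop 2] with k hk hk2
  have hsucc : log ((k + 1 : ℕ) : ℝ) ≤ 2 * log k := by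
    rw [show 2 * log (k : ℝ) = log ((k : ℝ) ^ 2) by rw [log_pow]; norm_num]
    exact log_le_log (by positivity) (by push_cast; norm_cast; nlinarith)
  linarith

theorem isLittleO_log_rpow_mul_exp_sqrt
    (ht : (fun k => log (t k)) ~[atTop] fun k : ℕ => log (k : ℝ)) :
    (fun k : ℕ => log k ^ ((3 : ℝ) / 4) * exp √(log (t (k + 1)) / 6.315))
      =o[atTop] fun k : ℕ => (k : ℝ) := by
  have hbound : (fun k : ℕ => log k ^ ((3 : ℝ) / 4) * exp √(log (t (k + 1)) / 6.315))
      =O[atTop] fun k : ℕ => log k ^ ((3 : ℝ) / 4) * exp √(log k) := by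
    refine IsBigO.of_bound' ?_
    filter_upwards [eventually_log_succ_le_four_mul_log ht,
      tendsto_log_natCast_atTop.eventually_ge_atTop 0] with k hk hlog
    rw [norm_of_nonneg (by positivity), norm_of_nonneg (by positivity)]
    gcongr
    rw [div_le_iff₀ (by norm_num)]
    linarith
  refine hbound.trans_isLittleO <|
    ((isLittleO_rpow_mul_exp_sqrt_exp _).comp_tendsto tendsto_log_natCast_atTop).congr' .rfl ?_
  filter_upwards [eventually_gt_atTop 0] with k hk
  exact exp_log (by exact_mod_cast hk)

theorem tendsto_log_rpow_mul_exp_sqrt_atTop :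
    Tendsto (fun k : ℕ => log k ^ ((3 : ℝ) / 4) * exp √(log (t (k + 1)) / 6.315))
      atTop atTop := by
  refine tendsto_atTop_mono' _ ?_ <|
    (tendsto_rpow_atTop (y := 3 / 4) (by norm_num)).comp tendsto_log_natCast_atTop
  filter_upwards [tendsto_log_natCast_atTop.eventually_ge_atTop 0] with k hlog
  exact le_mul_of_one_le_right (rpow_nonneg hlog _) (one_le_exp (sqrt_nonneg _))

end Sequences

theorem stmt16_general (b ξ : ℝ) (t bs ds : ℕ → ℝ)
    (htasymp : Tendsto (fun k : ℕ => t k / (k * Real.log k)) atTop (nhds 1))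
    (hbasymp : Tendsto (fun k : ℕ => bs k / (t k / Real.log (t k))) atTop (nhds 1))
    (hdasymp : Tendsto (fun k : ℕ =>
        ds k / (Real.log k ^ ((3 : ℝ) / 4) *
          Real.exp (Real.sqrt (Real.log (t (k + 1)) / 6.315)))) atTop (nhds 1)) :
    Tendsto (fun k : ℕ => ((b + bs k) / (b + ds k)) ^ (ξ + k - 1 : ℝ)) atTop atTop := by
  set D : ℕ → ℝ := fun k => log k ^ ((3 : ℝ) / 4) * exp √(log (t (k + 1)) / 6.315)
  have hk : Tendsto (fun k : ℕ => (k : ℝ)) atTop atTop := tendsto_natCast_atTop_atTop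
  have hD : Tendsto D atTop atTop := tendsto_log_rpow_mul_exp_sqrt_atTop
  have ht := isEquivalent_of_tendsto_one htasymp
  have hnum : (fun k => b + bs k) ~[atTop] fun k : ℕ => (k : ℝ) :=
    ((isEquivalent_of_tendsto_one hbasymp).trans (isEquivalent_div_log_self ht)).const_add hk b
  have hden : (fun k => b + ds k) ~[atTop] D :=
    (isEquivalent_of_tendsto_one hdasymp).const_add hD b
  have hden_num : (fun k => b + ds k) =o[atTop] fun k => b + bs k :=
    hden.isBigO.trans_isLittleO <|
      (isLittleO_log_rpow_mul_exp_sqrt (isEquivalent_log_of_isEquivalent_mul_log ht)).trans_isBigO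
        hnum.isBigO_symm
  have hbase : Tendsto (fun k => (b + bs k) / (b + ds k)) atTop atTop :=
    hden_num.tendsto_div_atTop ((hnum.symm.tendsto_atTop hk).eventually_gt_atTop 0)
      ((hden.symm.tendsto_atTop hD).eventually_gt_atTop 0)
  refine hbase.rpow_of_one_le ?_
  filter_upwards [hk.eventually_ge_atTop (2 - ξ)] with k hk2
  linarith

theorem stmt16 (b ξ : ℝ) (hb : 0 ≤ b) (hξ : 0 ≤ ξ)
    (t bs ds : ℕ → ℝ) (ht : ∀ k, 0 < t k) (hbs : ∀ k, 0 < bs k) (hds : ∀ k, 0 < ds k)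
    (htasymp : Tendsto (fun k : ℕ => t k / (k * Real.log k)) atTop (nhds 1))
    (hbasymp : Tendsto (fun k : ℕ => bs k / (t k / Real.log (t k))) atTop (nhds 1))
    (hdasymp : Tendsto (fun k : ℕ =>
        ds k / (Real.log k ^ ((3 : ℝ) / 4) *
          Real.exp (Real.sqrt (Real.log (t (k + 1)) / 6.315)))) atTop (nhds 1)) :
    Tendsto (fun k : ℕ => ((b + bs k) / (b + ds k)) ^ (ξ + k - 1 : ℝ)) atTop atTop :=
  stmt16_general b ξ t bs ds htasymp hbasymp hdasymp
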